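/- arXiv:1209.6236 — 2 statements merged into one kernel-verified Lean document; each statement's English description precedes it below -/
import Mathlib

section
/- Let (M, d, μ) be a doubling metric measure space with homogeneous dimension Q (i.e. μ(B(x,λr)) ≤ C λ^Q μ(B(x,r)) for λ ≥ 1), let ε > 0 and Q/(Q+ε) < p ≤ 1. Then there is a constant C' such that for every z ∈ M and R > 0, ∫_{{x : d(x,z) ≥ R}} [ V(x,z) · d(x,z)^ε ]^{−p} dμ(x) ≤ C' R^{−pε} μ(B(z,R))^{1−p}, where V(x,z) = μ(B(z, d(x,z))). -/
/-!
Split `{x | R ≤ d(x,z)}` into the dyadic shells `2^k R ≤ d(x,z) < 2^(k+1) R`. On the `k`-th shell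
the integrand is at most `(V_k (2^k R)^ε)^(-p)` with `V_k = μ(B(z, 2^k R))`, and doubling bounds the
shell's measure by a multiple of `V_k`, so the shell contributes `≲ (2^k R)^(-pε) V_k^(1-p)`.
Doubling again, `V_k ≤ C 2^(kQ) μ(B(z,R))`, and since `1 - p ≥ 0` this gives
`≲ R^(-pε) μ(B(z,R))^(1-p) · 2^(k(Q(1-p) - pε))`. The exponent `Q(1-p) - pε` is negative exactly
when `p > Q/(Q+ε)`, so the shells sum to a geometric series.
-/

open Metric MeasureTheory
open scoped ENNReal

namespace ENNReal

theorem rpow_neg_mul_self_le (b : ℝ≥0∞) {p : ℝ} (hp : 0 ≤ p) : b ^ (-p) * b ≤ b ^ (1 - p) := by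
  rcases eq_or_ne b 0 with rfl | hb0
  · simp
  rcases eq_or_ne b ⊤ with rfl | hbt
  · rcases hp.eq_or_lt with rfl | hp
    · simp
    · simp [ENNReal.top_rpow_of_neg (neg_lt_zero.2 hp)]
  · rw [sub_eq_neg_add, ENNReal.rpow_add _ _ hb0 hbt, ENNReal.rpow_one]

theorem tsum_ofReal_mul_pow {c r : ℝ} (hc : 0 ≤ c) (hr0 : 0 ≤ r) (hr1 : r < 1) :
    ∑' k : ℕ, ENNReal.ofReal (c * r ^ k) = ENNReal.ofReal (c * (1 - r)⁻¹) := by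
  rw [← ENNReal.ofReal_tsum_of_nonneg (fun k => by positivity)
    ((summable_geometric_of_lt_one hr0 hr1).mul_left c), tsum_mul_left,
    tsum_geometric_of_lt_one hr0 hr1]

end ENNReal

theorem Real.rpow_neg_mul_doubling_rpow_eq {C R lam Q p ε : ℝ} (hC : 0 ≤ C) (hR : 0 < R)
    (hlam : 0 < lam) :
    (lam * R) ^ (-(p * ε)) * (C * lam ^ Q) ^ (1 - p) =
      C ^ (1 - p) * R ^ (-(p * ε)) * lam ^ (Q * (1 - p) - p * ε) := by
  rw [Real.mul_rpow hlam.le hR.le, Real.mul_rpow hC (by positivity), ← Real.rpow_mul hlam.le,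
    sub_eq_add_neg (Q * (1 - p)), Real.rpow_add hlam]
  ring

theorem Metric.setOf_le_dist_subset_iUnion_dyadic {M : Type*} [PseudoMetricSpace M] (z : M)
    {R : ℝ} (hR : 0 < R) :
    {x | R ≤ dist x z} ⊆ ⋃ k : ℕ, ball z (2 ^ (k + 1) * R) \ ball z (2 ^ k * R) := by
  intro x (hx : R ≤ dist x z)
  obtain ⟨k, hk1, hk2⟩ := exists_nat_pow_near ((one_le_div hR).2 hx) one_lt_two
  refine Set.mem_iUnion.2 ⟨k, ?_, ?_⟩
  · exact mem_ball.2 ((div_lt_iff₀ hR).1 hk2)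
  · exact fun h => (mem_ball.1 h).not_ge ((le_div_iff₀ hR).1 hk1)

section

variable {M : Type*} [PseudoMetricSpace M] [MeasurableSpace M] (μ : Measure M)

def HasHomogeneousDimension (C Q : ℝ) : Prop :=
  ∀ (x : M) (r lam : ℝ), 0 < r → 1 ≤ lam →
    μ (ball x (lam * r)) ≤ ENNReal.ofReal (C * lam ^ Q) * μ (ball x r)

variable {μ}

theorem setLIntegral_measure_ball_mul_rpow_neg_le {A : Set M} {z : M} {ρ ε p : ℝ} {D : ℝ≥0∞}
    (hρ : 0 < ρ) (hε : 0 ≤ ε) (hp : 0 ≤ p) (hA : ∀ x ∈ A, ρ ≤ dist x z)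
    (hμA : μ A ≤ D * μ (ball z ρ)) :
    ∫⁻ x in A, (μ (ball z (dist x z)) * ENNReal.ofReal (dist x z ^ ε)) ^ (-p) ∂μ ≤
      D * ENNReal.ofReal (ρ ^ (-(p * ε))) * μ (ball z ρ) ^ (1 - p) := by
  set V := μ (ball z ρ)
  set a := ENNReal.ofReal (ρ ^ ε)
  have ha : 0 < ρ ^ ε := Real.rpow_pos_of_pos hρ ε
  have hpointwise : ∀ x ∈ A,
      (μ (ball z (dist x z)) * ENNReal.ofReal (dist x z ^ ε)) ^ (-p) ≤ (V * a) ^ (-p) := by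
    intro x hx
    have hle : V * a ≤ μ (ball z (dist x z)) * ENNReal.ofReal (dist x z ^ ε) :=
      mul_le_mul' (measure_mono (ball_subset_ball (hA x hx)))
        (ENNReal.ofReal_le_ofReal (Real.rpow_le_rpow hρ.le (hA x hx) hε))
    rw [ENNReal.rpow_neg, ENNReal.rpow_neg]
    gcongr
  -- `a` is neither `0` nor `∞`, so this splits even when `V` is `0` or `∞`.
  have hsplit : (V * a) ^ (-p) = V ^ (-p) * a ^ (-p) := by
    rw [ENNReal.mul_rpow_eq_ite, if_neg]
    simp [a, ha]
  calc _ ≤ ∫⁻ _ in A, (V * a) ^ (-p) ∂μ := setLIntegral_mono measurable_const hpointwise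
    _ = (V * a) ^ (-p) * μ A := setLIntegral_const _ _
    _ ≤ V ^ (-p) * a ^ (-p) * (D * V) := by rw [hsplit]; gcongr
    _ = D * a ^ (-p) * (V ^ (-p) * V) := by ring
    _ ≤ D * a ^ (-p) * V ^ (1 - p) := by gcongr; exact ENNReal.rpow_neg_mul_self_le V hp
    _ = D * ENNReal.ofReal (ρ ^ (-(p * ε))) * V ^ (1 - p) := by
      rw [ENNReal.ofReal_rpow_of_pos ha, ← Real.rpow_mul hρ.le, mul_neg, mul_comm ε]

variable {C Q : ℝ}

theorem HasHomogeneousDimension.setLIntegral_dyadic_shell_le (hμ : HasHomogeneousDimension μ C Q)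
    (hC : 0 ≤ C) {ε p : ℝ} (hε : 0 ≤ ε) (hp0 : 0 ≤ p) (hp1 : p ≤ 1) (z : M) {R : ℝ}
    (hR : 0 < R) (k : ℕ) :
    ∫⁻ x in ball z (2 ^ (k + 1) * R) \ ball z (2 ^ k * R),
        (μ (ball z (dist x z)) * ENNReal.ofReal (dist x z ^ ε)) ^ (-p) ∂μ ≤
      ENNReal.ofReal (C * 2 ^ Q * C ^ (1 - p) * R ^ (-(p * ε)) *
        (2 ^ (Q * (1 - p) - p * ε)) ^ k) * μ (ball z R) ^ (1 - p) := by
  have h2k : (0 : ℝ) < 2 ^ k := by positivity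
  have hρ : 0 < 2 ^ k * R := mul_pos h2k hR
  have hshell : μ (ball z (2 ^ (k + 1) * R) \ ball z (2 ^ k * R)) ≤
      ENNReal.ofReal (C * 2 ^ Q) * μ (ball z (2 ^ k * R)) := by
    rw [pow_succ, mul_comm _ (2 : ℝ), mul_assoc]
    exact (measure_mono Set.sdiff_subset).trans (hμ z _ 2 hρ one_le_two)
  have hball : μ (ball z (2 ^ k * R)) ^ (1 - p) ≤
      ENNReal.ofReal ((C * (2 ^ k) ^ Q) ^ (1 - p)) * μ (ball z R) ^ (1 - p) := by
    rw [← ENNReal.ofReal_rpow_of_nonneg (by positivity) (by linarith),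
      ← ENNReal.mul_rpow_of_nonneg _ _ (by linarith)]
    exact ENNReal.rpow_le_rpow (hμ z R _ hR (one_le_pow₀ one_le_two)) (by linarith)
  calc _ ≤ ENNReal.ofReal (C * 2 ^ Q) * ENNReal.ofReal ((2 ^ k * R) ^ (-(p * ε))) *
        μ (ball z (2 ^ k * R)) ^ (1 - p) :=
      setLIntegral_measure_ball_mul_rpow_neg_le hρ hε hp0
        (fun x hx => not_lt.1 hx.2) hshell
    _ ≤ ENNReal.ofReal (C * 2 ^ Q) * ENNReal.ofReal ((2 ^ k * R) ^ (-(p * ε))) *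
        (ENNReal.ofReal ((C * (2 ^ k) ^ Q) ^ (1 - p)) * μ (ball z R) ^ (1 - p)) := by
      gcongr
    _ = ENNReal.ofReal (C * 2 ^ Q * ((2 ^ k * R) ^ (-(p * ε)) * (C * (2 ^ k) ^ Q) ^ (1 - p))) *
        μ (ball z R) ^ (1 - p) := by
      rw [ENNReal.ofReal_mul (by positivity : (0 : ℝ) ≤ C * 2 ^ Q),
        ENNReal.ofReal_mul (by positivity : (0 : ℝ) ≤ (2 ^ k * R) ^ (-(p * ε)))]
      ring
    _ = _ := by
      rw [Real.rpow_neg_mul_doubling_rpow_eq hC hR h2k, ← Real.rpow_mul_natCast two_pos.le,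
        ← Real.rpow_natCast_mul two_pos.le, mul_comm (k : ℝ)]
      ring_nf

end

/-- Annulus decomposition estimate: in a doubling space of homogeneous dimension `Q`,
for `Q/(Q+ε) < p ≤ 1`, `∫_{d(x,z) ≥ R} (V(x,z) d(x,z)^ε)^{-p} dμ ≲ R^{-pε} μ(B(z,R))^{1-p}`. -/
theorem annulus_integral_bound {M : Type*} [MetricSpace M] [MeasurableSpace M]
    (μ : Measure M) (C Q : ℝ) (hC : 0 < C) (hQ : 0 < Q)
    (hdoub : ∀ (x : M) (r lam : ℝ), 0 < r → 1 ≤ lam →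
      μ (ball x (lam * r)) ≤ ENNReal.ofReal (C * lam ^ Q) * μ (ball x r))
    (ε p : ℝ) (hε : 0 < ε) (hp1 : Q / (Q + ε) < p) (hp2 : p ≤ 1) :
    ∃ C' : ℝ, 0 < C' ∧ ∀ (z : M) (R : ℝ), 0 < R →
      ∫⁻ x in {x : M | R ≤ dist x z},
          (μ (ball z (dist x z)) * ENNReal.ofReal (dist x z ^ ε)) ^ (-p) ∂μ ≤
        ENNReal.ofReal (C' * R ^ (-(p * ε))) * μ (ball z R) ^ (1 - p) := by
  have hQε : 0 < Q + ε := by linarith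
  have hp0 : 0 < p := (div_pos hQ hQε).trans hp1
  set r : ℝ := 2 ^ (Q * (1 - p) - p * ε)
  have hr1 : r < 1 := Real.rpow_lt_one_of_one_lt_of_neg one_lt_two <| by
    nlinarith [(div_lt_iff₀ hQε).1 hp1]
  have hr0 : 0 ≤ r := by positivity
  set K : ℝ := C * 2 ^ Q * C ^ (1 - p)
  refine ⟨K * (1 - r)⁻¹, mul_pos (by positivity) (inv_pos.2 (sub_pos.2 hr1)), fun z R hR => ?_⟩
  calc _ ≤ ∑' k : ℕ, ∫⁻ x in ball z (2 ^ (k + 1) * R) \ ball z (2 ^ k * R),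
          (μ (ball z (dist x z)) * ENNReal.ofReal (dist x z ^ ε)) ^ (-p) ∂μ :=
        (lintegral_mono_set (setOf_le_dist_subset_iUnion_dyadic z hR)).trans
          (lintegral_iUnion_le _ _)
    _ ≤ ∑' k : ℕ, ENNReal.ofReal (K * R ^ (-(p * ε)) * r ^ k) * μ (ball z R) ^ (1 - p) :=
        ENNReal.tsum_le_tsum fun k =>
          HasHomogeneousDimension.setLIntegral_dyadic_shell_le hdoub hC.le hε.le hp0.le hp2 z hR k
    _ = ENNReal.ofReal (K * (1 - r)⁻¹ * R ^ (-(p * ε))) * μ (ball z R) ^ (1 - p) := by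
      rw [ENNReal.tsum_mul_right, ENNReal.tsum_ofReal_mul_pow (by positivity) hr0 hr1,
        mul_right_comm]
end

section
/- Let (M,d,μ) be a doubling metric measure space and ε > 0. There is a constant C such that for all x, y ∈ M and all scales r, s > 0: ∫_M [1/(V_r(x) + V(x,z))] · (r/(r + d(x,z)))^ε · [1/(V_s(y) + V(z,y))] · (s/(s + d(z,y)))^ε dμ(z) ≤ C · [1/(V_t(x) + V(x,y))] · (t/(t + d(x,y)))^ε, where t = max(r,s), V_r(x) = μ(B(x,r)) and V(x,y) = μ(B(x, d(x,y))). -/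
open Metric MeasureTheory
open scoped ENNReal

/-!
Doubling lets one move the ball `B(z, d(z,y))` of the second factor to `B(y, d(y,z))` at the
cost of a factor `A`, so both factors become kernels `K_r(x, z)`, `K_s(y, z)` of the same shape.
With `t = max r s`, at every `z` one of them is at most a constant times `K_t(x, y)`: if
`d(x,y) ≤ t` this holds for the factor of scale `t`, and otherwise `z` is at distance at least
`d(x,y)/2` from `x` or from `y`. The other factor integrates to at most `A (1 - 2^{-ε})⁻¹`,
uniformly in the centre and the scale, by summing over the dyadic annuli
`2^k r ≤ d(x,z) < 2^{k+1} r`.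
-/

lemma ENNReal.inv_le_mul_inv_of_le_mul {c D E : ℝ≥0∞} (hc0 : c ≠ 0) (hc : c ≠ ∞)
    (h : E ≤ c * D) : D⁻¹ ≤ c * E⁻¹ := by
  rw [← div_eq_mul_inv, ENNReal.le_div_iff_mul_le (Or.inr hc0) (Or.inr hc)]
  calc D⁻¹ * E ≤ D⁻¹ * (c * D) := by gcongr
    _ = c * (D⁻¹ * D) := by ring
    _ ≤ c := mul_le_of_le_one_right' (ENNReal.inv_mul_le_one D)

lemma ENNReal.inv_mul_ofReal_rpow_le {c D E : ℝ≥0∞} {a b ε : ℝ} (hc0 : c ≠ 0) (hc : c ≠ ∞)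
    (hE : E ≤ c * D) (ha : 0 ≤ a) (hab : a ≤ 2 * b) (hε : 0 ≤ ε) :
    D⁻¹ * ENNReal.ofReal (a ^ ε) ≤
      c * ENNReal.ofReal (2 ^ ε) * (E⁻¹ * ENNReal.ofReal (b ^ ε)) := by
  have hpow : a ^ ε ≤ 2 ^ ε * b ^ ε := by
    rw [← Real.mul_rpow zero_le_two (by linarith)]
    exact Real.rpow_le_rpow ha hab hε
  calc D⁻¹ * ENNReal.ofReal (a ^ ε) ≤ c * E⁻¹ * ENNReal.ofReal (2 ^ ε * b ^ ε) :=
        mul_le_mul' (inv_le_mul_inv_of_le_mul hc0 hc hE) (ENNReal.ofReal_le_ofReal hpow)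
    _ = c * ENNReal.ofReal (2 ^ ε) * (E⁻¹ * ENNReal.ofReal (b ^ ε)) := by
        rw [ENNReal.ofReal_mul (by positivity)]
        ring

theorem MeasureTheory.lintegral_mul_le_of_forall_le_or_le {α : Type*} [MeasurableSpace α]
    {μ : Measure α} {f g : α → ℝ≥0∞} {K : ℝ≥0∞} (hf : Measurable f) (hg : Measurable g)
    (h : ∀ a, f a ≤ K ∨ g a ≤ K) :
    ∫⁻ a, f a * g a ∂μ ≤ K * (∫⁻ a, f a ∂μ + ∫⁻ a, g a ∂μ) := by
  calc ∫⁻ a, f a * g a ∂μ ≤ ∫⁻ a, K * (f a + g a) ∂μ := lintegral_mono fun a => by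
        rcases h a with hfa | hga
        · calc f a * g a ≤ K * g a := by gcongr
            _ ≤ K * (f a + g a) := by gcongr; exact le_add_self
        · calc f a * g a ≤ K * f a := by rw [mul_comm]; gcongr
            _ ≤ K * (f a + g a) := by gcongr; exact le_self_add
    _ = K * (∫⁻ a, f a ∂μ + ∫⁻ a, g a ∂μ) := by
        rw [← lintegral_add_left hf g]
        exact lintegral_const_mul K (hf.add hg)

section Doubling

variable {M : Type*} [MetricSpace M] [MeasurableSpace M]

def IsDoublingWith (μ : Measure M) (A : ℝ) : Prop :=
  ∀ (x : M) (r : ℝ), 0 < r → μ (ball x (2 * r)) ≤ ENNReal.ofReal A * μ (ball x r)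

noncomputable def bumpKernel (μ : Measure M) (ε r : ℝ) (x z : M) : ℝ≥0∞ :=
  (μ (ball x r) + μ (ball x (dist x z)))⁻¹ * ENNReal.ofReal ((r / (r + dist x z)) ^ ε)

variable {μ : Measure M} {A ε r s t : ℝ}

lemma IsDoublingWith.measure_ball_dist_le (hdoub : IsDoublingWith μ A) (x y : M) :
    μ (ball x (dist x y)) ≤ ENNReal.ofReal A * μ (ball y (dist x y)) := by
  rcases (dist_nonneg (x := x) (y := y)).eq_or_lt with h | h
  · simp [← h]
  · refine (measure_mono fun v hv => ?_).trans (hdoub y _ h)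
    rw [mem_ball] at hv ⊢
    linarith [dist_triangle v x y]

lemma IsDoublingWith.inv_mul_le_bumpKernel (hA : 1 ≤ A) (hdoub : IsDoublingWith μ A) (y z : M) :
    (μ (ball y s) + μ (ball z (dist z y)))⁻¹ * ENNReal.ofReal ((s / (s + dist z y)) ^ ε) ≤
      ENNReal.ofReal A * bumpKernel μ ε s y z := by
  have hA' : 1 ≤ ENNReal.ofReal A := by simpa using ENNReal.ofReal_le_ofReal hA
  have hvol : μ (ball y s) + μ (ball y (dist z y)) ≤
      ENNReal.ofReal A * (μ (ball y s) + μ (ball z (dist z y))) := by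
    rw [mul_add, dist_comm z y]
    exact add_le_add (le_mul_of_one_le_left' hA') (hdoub.measure_ball_dist_le y z)
  rw [bumpKernel, dist_comm y z, ← mul_assoc]
  gcongr
  exact ENNReal.inv_le_mul_inv_of_le_mul (by positivity) ENNReal.ofReal_ne_top hvol

lemma measure_ball_max_le_add (μ : Measure M) (x : M) (a b : ℝ) :
    μ (ball x (max a b)) ≤ μ (ball x a) + μ (ball x b) := by
  rcases max_choice a b with h | h <;> rw [h]
  exacts [le_self_add, le_add_self]

lemma measurable_bumpKernel [BorelSpace M] (μ : Measure M) (ε r : ℝ) (x : M) :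
    Measurable (bumpKernel μ ε r x) := by
  have hball : Measurable fun ρ : ℝ => μ (ball x ρ) :=
    Monotone.measurable fun _ _ h => measure_mono (ball_subset_ball h)
  have hdist : Measurable fun z => dist x z := (continuous_const.dist continuous_id).measurable
  have hball_dist : Measurable fun z => μ (ball x (dist x z)) := hball.comp hdist
  exact (measurable_const.add hball_dist).inv.mul <| ENNReal.measurable_ofReal.comp <|
    (measurable_const.div (measurable_const.add hdist)).pow_const ε

lemma bumpKernel_le_of_two_pow_mul_le (hA : 0 < A) (hdoub : IsDoublingWith μ A) (hε : 0 ≤ ε)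
    (hr : 0 < r) {x z : M} {k : ℕ} (hk : 2 ^ k * r ≤ max r (dist x z)) :
    bumpKernel μ ε r x z ≤
      ENNReal.ofReal A * ENNReal.ofReal (2⁻¹ ^ ε) ^ k * (μ (ball x (2 ^ (k + 1) * r)))⁻¹ := by
  have hvol : μ (ball x (2 ^ (k + 1) * r)) ≤
      ENNReal.ofReal A * (μ (ball x r) + μ (ball x (dist x z))) := by
    calc μ (ball x (2 ^ (k + 1) * r)) = μ (ball x (2 * (2 ^ k * r))) := by ring_nf
      _ ≤ ENNReal.ofReal A * μ (ball x (2 ^ k * r)) := hdoub x _ (by positivity)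
      _ ≤ ENNReal.ofReal A * μ (ball x (max r (dist x z))) := by gcongr
      _ ≤ ENNReal.ofReal A * (μ (ball x r) + μ (ball x (dist x z))) := by
          gcongr
          exact measure_ball_max_le_add μ x r (dist x z)
  have hratio : (r / (r + dist x z)) ^ ε ≤ (2⁻¹ ^ ε) ^ k := by
    rw [Real.rpow_pow_comm (by norm_num)]
    refine Real.rpow_le_rpow (by positivity) ?_ hε
    rw [div_le_iff₀ (by positivity), inv_pow, ← div_eq_inv_mul, le_div_iff₀ (by positivity),
      mul_comm]
    linarith [max_le_add_of_nonneg hr.le (dist_nonneg (x := x) (y := z))]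
  calc bumpKernel μ ε r x z ≤ ENNReal.ofReal A * (μ (ball x (2 ^ (k + 1) * r)))⁻¹ *
        ENNReal.ofReal ((2⁻¹ ^ ε) ^ k) :=
      mul_le_mul' (ENNReal.inv_le_mul_inv_of_le_mul (by simpa using hA) ENNReal.ofReal_ne_top hvol)
        (ENNReal.ofReal_le_ofReal hratio)
    _ = _ := by rw [ENNReal.ofReal_pow (by positivity)]; ring

theorem lintegral_bumpKernel_le [BorelSpace M] (hA : 0 < A) (hdoub : IsDoublingWith μ A)
    (hε : 0 ≤ ε) (x : M) (hr : 0 < r) :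
    ∫⁻ z, bumpKernel μ ε r x z ∂μ ≤ ENNReal.ofReal A * (1 - ENNReal.ofReal (2⁻¹ ^ ε))⁻¹ := by
  set δ := ENNReal.ofReal (2⁻¹ ^ ε)
  set B : ℕ → Set M := fun k => ball x (2 ^ (k + 1) * r)
  have hcover : ∀ z, bumpKernel μ ε r x z ≤
      ∑' k, (B k).indicator (fun _ => ENNReal.ofReal A * δ ^ k * (μ (B k))⁻¹) z := by
    intro z
    obtain ⟨k, hk, hk'⟩ := exists_nat_pow_near (x := max r (dist x z) / r)
      (by rw [le_div_iff₀ hr, one_mul]; exact le_max_left _ _) one_lt_two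
    rw [le_div_iff₀ hr] at hk
    rw [div_lt_iff₀ hr] at hk'
    have hz : z ∈ B k := by
      rw [mem_ball, dist_comm]
      exact (le_max_right _ _).trans_lt hk'
    refine le_trans ?_ (ENNReal.le_tsum k)
    rw [Set.indicator_of_mem hz]
    exact bumpKernel_le_of_two_pow_mul_le hA hdoub hε hr hk
  calc ∫⁻ z, bumpKernel μ ε r x z ∂μ
      ≤ ∫⁻ z, ∑' k, (B k).indicator (fun _ => ENNReal.ofReal A * δ ^ k * (μ (B k))⁻¹) z ∂μ :=
        lintegral_mono hcover
    _ = ∑' k, ENNReal.ofReal A * δ ^ k * (μ (B k))⁻¹ * μ (B k) := by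
        rw [lintegral_tsum fun k => (measurable_const.indicator measurableSet_ball).aemeasurable]
        simp only [B, lintegral_indicator_const measurableSet_ball]
    _ ≤ ∑' k, ENNReal.ofReal A * δ ^ k := ENNReal.tsum_le_tsum fun k => by
        rw [mul_assoc]
        exact mul_le_of_le_one_right' (ENNReal.inv_mul_le_one _)
    _ = ENNReal.ofReal A * (1 - δ)⁻¹ := by rw [ENNReal.tsum_mul_left, ENNReal.tsum_geometric]

lemma bumpKernel_le_mul_bumpKernel (hA : 0 < A) (hdoub : IsDoublingWith μ A) (hε : 0 ≤ ε)
    {x y w z : M} (hr : 0 < r) (hrt : r ≤ t) (hw : dist x w ≤ dist x y)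
    -- covers both `r = t ≥ d(x,y)` and `t ≤ d(x,y) ≤ 2 d(w,z)`
    (hfar : max t (dist x y) ≤ max r (2 * dist w z)) :
    bumpKernel μ ε r w z ≤
      ENNReal.ofReal (2 * A ^ 2) * ENNReal.ofReal (2 ^ ε) * bumpKernel μ ε t x y := by
  set m := max t (dist x y)
  set ρ := max r (dist w z)
  have hρ : 0 < ρ := lt_max_of_lt_left hr
  have hsub : ball x m ⊆ ball w (2 * (2 * ρ)) := fun v hv => by
    rw [mem_ball] at hv ⊢
    have : max r (2 * dist w z) ≤ 2 * ρ := max_le (by linarith [le_max_left r (dist w z)])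
      (by linarith [le_max_right r (dist w z)])
    linarith [dist_triangle v x w, le_max_right t (dist x y)]
  have hvol : μ (ball x t) + μ (ball x (dist x y)) ≤
      ENNReal.ofReal (2 * A ^ 2) * (μ (ball w r) + μ (ball w (dist w z))) := by
    calc μ (ball x t) + μ (ball x (dist x y)) ≤ μ (ball x m) + μ (ball x m) := by
          gcongr
          exacts [le_max_left _ _, le_max_right _ _]
      _ ≤ 2 * (ENNReal.ofReal A * (ENNReal.ofReal A * μ (ball w ρ))) := by
          rw [← two_mul]
          gcongr
          calc μ (ball x m) ≤ μ (ball w (2 * (2 * ρ))) := measure_mono hsub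
            _ ≤ ENNReal.ofReal A * μ (ball w (2 * ρ)) := hdoub w _ (by positivity)
            _ ≤ ENNReal.ofReal A * (ENNReal.ofReal A * μ (ball w ρ)) := by
                gcongr; exact hdoub w _ hρ
      _ ≤ 2 * (ENNReal.ofReal A * (ENNReal.ofReal A * (μ (ball w r) + μ (ball w (dist w z))))) :=
          by grw [measure_ball_max_le_add μ w r (dist w z)]
      _ = ENNReal.ofReal (2 * A ^ 2) * (μ (ball w r) + μ (ball w (dist w z))) := by
          rw [ENNReal.ofReal_mul zero_le_two, ENNReal.ofReal_pow hA.le, ENNReal.ofReal_ofNat]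
          ring
  have hratio : r / (r + dist w z) ≤ 2 * (t / (t + dist x y)) := by
    have hdist : r * dist x y ≤ r * t + 2 * t * dist w z := by
      rcases le_max_iff.mp ((le_max_right t (dist x y)).trans hfar) with h | h <;>
        nlinarith [dist_nonneg (x := w) (y := z)]
    have htd : 0 < t + dist x y := by linarith [dist_nonneg (x := x) (y := y)]
    rw [← mul_div_assoc, div_le_div_iff₀ (by positivity) htd]
    nlinarith
  exact ENNReal.inv_mul_ofReal_rpow_le (ENNReal.ofReal_pos.mpr (by positivity)).ne'
    ENNReal.ofReal_ne_top hvol (by positivity) hratio hε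

theorem lintegral_bumpKernel_mul_bumpKernel_le [BorelSpace M] (hA : 0 < A)
    (hdoub : IsDoublingWith μ A) (hε : 0 ≤ ε) (x y : M) (hr : 0 < r) (hs : 0 < s) :
    ∫⁻ z, bumpKernel μ ε r x z * bumpKernel μ ε s y z ∂μ ≤
      ENNReal.ofReal (2 * A ^ 2) * ENNReal.ofReal (2 ^ ε) * bumpKernel μ ε (max r s) x y *
        (∫⁻ z, bumpKernel μ ε r x z ∂μ + ∫⁻ z, bumpKernel μ ε s y z ∂μ) := by
  refine lintegral_mul_le_of_forall_le_or_le (measurable_bumpKernel μ ε r x)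
    (measurable_bumpKernel μ ε s y) fun z => ?_
  by_cases hx : max (max r s) (dist x y) ≤ max r (2 * dist x z)
  · exact .inl (bumpKernel_le_mul_bumpKernel hA hdoub hε hr (le_max_left r s)
      (by simp) hx)
  · refine .inr (bumpKernel_le_mul_bumpKernel hA hdoub hε hs (le_max_right r s) le_rfl ?_)
    have := dist_triangle_right x y z
    grind

end Doubling

theorem kernel_composition_estimate_general {M : Type*} [MetricSpace M] [MeasurableSpace M]
    [BorelSpace M] (μ : Measure M) (A : ℝ) (hA : 1 ≤ A)
    (hdoub : ∀ (x : M) (r : ℝ), 0 < r →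
      μ (ball x (2 * r)) ≤ ENNReal.ofReal A * μ (ball x r))
    (ε : ℝ) (hε : 0 < ε) :
    ∃ C : ℝ, 0 < C ∧ ∀ (x y : M) (r s : ℝ), 0 < r → 0 < s →
      ∫⁻ z : M,
          (μ (ball x r) + μ (ball x (dist x z)))⁻¹ *
            ENNReal.ofReal ((r / (r + dist x z)) ^ ε) *
              ((μ (ball y s) + μ (ball z (dist z y)))⁻¹ *
                ENNReal.ofReal ((s / (s + dist z y)) ^ ε)) ∂μ ≤
        ENNReal.ofReal C *
          ((μ (ball x (max r s)) + μ (ball x (dist x y)))⁻¹ *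
            ENNReal.ofReal ((max r s / (max r s + dist x y)) ^ ε)) := by
  have hdoub : IsDoublingWith μ A := hdoub
  have hA₀ : 0 < A := one_pos.trans_le hA
  set C₀ := ENNReal.ofReal A * (1 - ENNReal.ofReal (2⁻¹ ^ ε))⁻¹
  set C := ENNReal.ofReal A * (ENNReal.ofReal (2 * A ^ 2) * ENNReal.ofReal (2 ^ ε)) * (C₀ + C₀)
  have hδ : ENNReal.ofReal (2⁻¹ ^ ε) < 1 :=
    ENNReal.ofReal_lt_one.mpr (Real.rpow_lt_one (by norm_num) (by norm_num) hε)
  have hC_ne_top : C ≠ ∞ := by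
    have := (tsub_pos_of_lt hδ).ne'
    finiteness
  have hC_ne_zero : C ≠ 0 := by
    simp [C, C₀, hA₀, hA₀.ne', ENNReal.sub_eq_top_iff, Real.rpow_pos_of_pos]
  refine ⟨C.toReal, ENNReal.toReal_pos hC_ne_zero hC_ne_top, fun x y r s hr hs => ?_⟩
  rw [ENNReal.ofReal_toReal hC_ne_top]
  calc _ ≤ ∫⁻ z, ENNReal.ofReal A * (bumpKernel μ ε r x z * bumpKernel μ ε s y z) ∂μ :=
        lintegral_mono fun z => by
          rw [mul_left_comm (ENNReal.ofReal A)]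
          exact mul_le_mul' le_rfl (hdoub.inv_mul_le_bumpKernel hA y z)
    _ = ENNReal.ofReal A * ∫⁻ z, bumpKernel μ ε r x z * bumpKernel μ ε s y z ∂μ :=
        lintegral_const_mul' _ _ ENNReal.ofReal_ne_top
    _ ≤ ENNReal.ofReal A * (ENNReal.ofReal (2 * A ^ 2) * ENNReal.ofReal (2 ^ ε) *
          bumpKernel μ ε (max r s) x y * (C₀ + C₀)) := by
        grw [lintegral_bumpKernel_mul_bumpKernel_le hA₀ hdoub hε.le x y hr hs,
          lintegral_bumpKernel_le hA₀ hdoub hε.le x hr,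
          lintegral_bumpKernel_le hA₀ hdoub hε.le y hs]
    _ = C * bumpKernel μ ε (max r s) x y := by ring

/-- Kernel-composition estimate on a space of homogeneous type: convolving two
normalized bump-type kernels of widths `r` and `s` yields a kernel of the same
form at the coarser scale `max r s`. -/
theorem kernel_composition_estimate {M : Type*} [MetricSpace M] [MeasurableSpace M]
    [BorelSpace M] (μ : Measure M) (A : ℝ) (hA : 1 ≤ A)
    (hdoub : ∀ (x : M) (r : ℝ), 0 < r →
      μ (ball x (2 * r)) ≤ ENNReal.ofReal A * μ (ball x r))
    (hpos : ∀ (x : M) (r : ℝ), 0 < r → 0 < μ (ball x r))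
    (hfin : ∀ (x : M) (r : ℝ), μ (ball x r) < ⊤)
    (ε : ℝ) (hε : 0 < ε) :
    ∃ C : ℝ, 0 < C ∧ ∀ (x y : M) (r s : ℝ), 0 < r → 0 < s →
      ∫⁻ z : M,
          (μ (ball x r) + μ (ball x (dist x z)))⁻¹ *
            ENNReal.ofReal ((r / (r + dist x z)) ^ ε) *
              ((μ (ball y s) + μ (ball z (dist z y)))⁻¹ *
                ENNReal.ofReal ((s / (s + dist z y)) ^ ε)) ∂μ ≤
        ENNReal.ofReal C *
          ((μ (ball x (max r s)) + μ (ball x (dist x y)))⁻¹ *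
            ENNReal.ofReal ((max r s / (max r s + dist x y)) ^ ε)) :=
  kernel_composition_estimate_general μ A hA hdoub ε hε
end
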